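/- Let i ∈ N be a buyer and X ⊆ N−i. Then the function G ↦ f_{w,d}(E_X ∪ G) − f_{w,d}(E_X) is monotone submodular on E_i (as a function of G ⊆ E_i). -/

import Mathlib

open Finset

noncomputable section

namespace TwoSidedMarket

variable {B S : Type*} [Fintype B] [Fintype S] [DecidableEq B] [DecidableEq S]

/-- A function `f` on subsets of a ground set `G` is monotone submodular:
`f ∅ = 0`, monotone on subsets of `G`, and submodular on subsets of `G`. -/
def IsMonoSubmodular {α : Type*} [DecidableEq α] (G : Finset α) (f : Finset α → ℝ) : Prop :=
  f ∅ = 0 ∧ (∀ A B : Finset α, A ⊆ B → B ⊆ G → f A ≤ f B) ∧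
    ∀ A B : Finset α, A ⊆ G → B ⊆ G → f (A ∩ B) + f (A ∪ B) ≤ f A + f B

/-- Monotone submodular, without the requirement of vanishing at `∅`. -/
def IsMonoSubmodularWeak {α : Type*} [DecidableEq α] (G : Finset α) (f : Finset α → ℝ) : Prop :=
  (∀ A B : Finset α, A ⊆ B → B ⊆ G → f A ≤ f B) ∧
    ∀ A B : Finset α, A ⊆ G → B ⊆ G → f (A ∩ B) + f (A ∪ B) ≤ f A + f B

/-- `E_i`: the edges of `E` incident to buyer `i`. -/
def Ei (E : Finset (B × S)) (i : B) : Finset (B × S) := E.filter fun e => e.1 = i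

/-- `E_j`: the edges of `E` incident to seller `j`. -/
def Ej (E : Finset (B × S)) (j : S) : Finset (B × S) := E.filter fun e => e.2 = j

/-- `E_X`: the edges of `E` incident to some buyer in `X`. -/
def EX (E : Finset (B × S)) (X : Finset B) : Finset (B × S) := E.filter fun e => e.1 ∈ X

/-- `N_F`: the buyers incident to some edge of `F`. -/
def NF (F : Finset (B × S)) : Finset B := F.image Prod.fst

/-- `x(F) = Σ_{e ∈ F} x e`. -/
def vsum (x : B × S → ℝ) (F : Finset (B × S)) : ℝ := ∑ e ∈ F, x e

/-- Membership `w ∈ P = ⊕_j P_j`: `w` is nonnegative, supported on `E`, and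
`w|_{E_j} ∈ P_j` for every seller `j`. -/
def memP (E : Finset (B × S)) (fj : S → Finset (B × S) → ℝ) (w : B × S → ℝ) : Prop :=
  (∀ e, 0 ≤ w e) ∧ (∀ e ∉ E, w e = 0) ∧ ∀ j : S, ∀ F ⊆ Ej E j, vsum w F ≤ fj j F

/-- `f(F) := Σ_{j ∈ M} f_j (E_j ∩ F)`. -/
def fTot (E : Finset (B × S)) (fj : S → Finset (B × S) → ℝ) (F : Finset (B × S)) : ℝ :=
  ∑ j : S, fj j (Ej E j ∩ F)

/-- `f_w(F) := min_{F ⊆ F' ⊆ E} (f(F') - w(F'))`. -/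
def fw (E : Finset (B × S)) (fj : S → Finset (B × S) → ℝ)
    (w : B × S → ℝ) (F : Finset (B × S)) : ℝ :=
  sInf {r : ℝ | ∃ F' : Finset (B × S), F ⊆ F' ∧ F' ⊆ E ∧ r = fTot E fj F' - vsum w F'}

/-- Membership in the remnant supply polytope `P_{w,d}`. -/
def memPwd (E : Finset (B × S)) (fj : S → Finset (B × S) → ℝ)
    (w : B × S → ℝ) (d : B → ℝ) (x : B × S → ℝ) : Prop :=
  (∀ e, 0 ≤ x e) ∧ (∀ e ∉ E, x e = 0) ∧ memP E fj (w + x) ∧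
    ∀ i : B, vsum x (Ei E i) ≤ d i

/-- `f_{w,d}(F) := max_{x ∈ P_{w,d}} x(F)`. -/
def fwd (E : Finset (B × S)) (fj : S → Finset (B × S) → ℝ)
    (w : B × S → ℝ) (d : B → ℝ) (F : Finset (B × S)) : ℝ :=
  sSup {r : ℝ | ∃ x : B × S → ℝ, memPwd E fj w d x ∧ r = vsum x F}

/-- `P^i_{w,d}(ξ)`: the remnant supply polytope of the buyers other than `i`,
given that buyer `i` receives `ξ`.  (Vectors indexed by `N - i` are encoded as
functions on all of `B` vanishing at `i`.) -/
def PiWd (E : Finset (B × S)) (fj : S → Finset (B × S) → ℝ)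
    (w : B × S → ℝ) (d : B → ℝ) (i : B) (ξ : B × S → ℝ) : Set (B → ℝ) :=
  {u | u i = 0 ∧ (∀ k, 0 ≤ u k) ∧
    ∃ x : B × S → ℝ, memPwd E fj w d x ∧ (∀ e ∈ Ei E i, x e = ξ e) ∧
      ∀ k : B, k ≠ i → vsum x (Ei E k) = u k}

/-- The clinching polytope `P^i_{w,d}` of buyer `i`:
all `ξ ∈ ℝ_{≥0}^{E_i}` with `P^i_{w,d}(ξ) = P^i_{w,d}(0)`. -/
def ClinchP (E : Finset (B × S)) (fj : S → Finset (B × S) → ℝ)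
    (w : B × S → ℝ) (d : B → ℝ) (i : B) : Set (B × S → ℝ) :=
  {ξ | (∀ e, 0 ≤ ξ e) ∧ (∀ e ∉ Ei E i, ξ e = 0) ∧
    PiWd E fj w d i ξ = PiWd E fj w d i 0}

/-!
`f_{w,d}(F)` is the value of a min cut, `min_Y (d(Y) + f_w(F ∖ E_Y))`. This is Edmonds'
polymatroid intersection theorem for `f_w`, which is monotone submodular because `w ∈ P`, and for
the demand polymatroid `U ↦ d(N_U)`; Edmonds' theorem in turn follows from Frank's discrete
sandwich theorem once one of the two polymatroids is truncated at the min-max value. For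
`F = E_X ∪ G` with `G ⊆ E_i`, optimal cuts for `G₁` and `G₂` uncross into cuts for `G₁ ∩ G₂` and
`G₁ ∪ G₂`, which gives submodularity in `G`.
-/

section SetFunction

variable {α : Type*} [DecidableEq α]

def IsSubmodularOn (A : Finset α) (f : Finset α → ℝ) : Prop :=
  ∀ s t, s ⊆ A → t ⊆ A → f (s ∩ t) + f (s ∪ t) ≤ f s + f t

def IsSupermodularOn (A : Finset α) (f : Finset α → ℝ) : Prop :=
  IsSubmodularOn A (-f)

def polymatroid (A : Finset α) (g : Finset α → ℝ) : Set (α → ℝ) :=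
  {x | 0 ≤ x ∧ ∀ s ⊆ A, ∑ e ∈ s, x e ≤ g s}

theorem IsMonoSubmodular.isSubmodularOn {A : Finset α} {f : Finset α → ℝ}
    (hf : IsMonoSubmodular A f) : IsSubmodularOn A f :=
  hf.2.2

theorem IsMonoSubmodular.nonneg {A : Finset α} {f : Finset α → ℝ} (hf : IsMonoSubmodular A f)
    {s : Finset α} (hs : s ⊆ A) : 0 ≤ f s :=
  hf.1 ▸ hf.2.1 ∅ s (empty_subset s) hs

theorem IsMonoSubmodular.subset {A A' : Finset α} {f : Finset α → ℝ} (hf : IsMonoSubmodular A f)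
    (hA' : A' ⊆ A) : IsMonoSubmodular A' f :=
  ⟨hf.1, fun s t hst ht => hf.2.1 s t hst (ht.trans hA'),
    fun s t hs ht => hf.2.2 s t (hs.trans hA') (ht.trans hA')⟩

theorem IsMonoSubmodularWeak.congr {A : Finset α} {f g : Finset α → ℝ}
    (hf : IsMonoSubmodularWeak A f) (hfg : ∀ s ⊆ A, f s = g s) : IsMonoSubmodularWeak A g := by
  refine ⟨fun s t hst ht => ?_, fun s t hs ht => ?_⟩
  · rw [← hfg s (hst.trans ht), ← hfg t ht]
    exact hf.1 s t hst ht
  · rw [← hfg _ (inter_subset_left.trans hs), ← hfg _ (union_subset hs ht), ← hfg s hs, ← hfg t ht]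
    exact hf.2 s t hs ht

theorem IsMonoSubmodularWeak.sub_empty {A : Finset α} {f : Finset α → ℝ}
    (hf : IsMonoSubmodularWeak A f) : IsMonoSubmodular A (fun s => f s - f ∅) :=
  ⟨sub_self _, fun s t hst ht => sub_le_sub_right (hf.1 s t hst ht) _,
    fun s t hs ht => by linarith [hf.2 s t hs ht]⟩

theorem IsSubmodularOn.comp_sdiff {A : Finset α} {f : Finset α → ℝ} (hf : IsSubmodularOn A f) :
    IsSubmodularOn A (fun s => f (A \ s)) := by
  intro s t _ _
  dsimp only
  rw [sdiff_inter_distrib_right, sdiff_union_distrib, add_comm (f _)]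
  exact hf _ _ sdiff_subset sdiff_subset

theorem IsMonoSubmodular.min_const {A : Finset α} {f : Finset α → ℝ} (hf : IsMonoSubmodular A f)
    {c : ℝ} (hc : 0 ≤ c) : IsMonoSubmodular A (fun s => min (f s) c) := by
  obtain ⟨hf0, hmono, hsub⟩ := hf
  refine ⟨by simp [hf0, hc], fun s t hst ht => min_le_min_right c (hmono s t hst ht), ?_⟩
  intro s t hs ht
  have hst := hsub s t hs ht
  have hs' := hmono (s ∩ t) s inter_subset_left hs
  have ht' := hmono (s ∩ t) t inter_subset_right ht
  simp only [min_def]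
  split_ifs <;> linarith

theorem isSubmodularOn_inf' {κ : Type*} {A : Finset α} (s : Finset κ)
    (hs : s.Nonempty) (ψ : κ → Finset α → ℝ)
    (h : ∀ y₁ ∈ s, ∀ y₂ ∈ s, ∀ t₁ ⊆ A, ∀ t₂ ⊆ A,
      ∃ y₃ ∈ s, ∃ y₄ ∈ s, ψ y₃ (t₁ ∩ t₂) + ψ y₄ (t₁ ∪ t₂) ≤ ψ y₁ t₁ + ψ y₂ t₂) :
    IsSubmodularOn A (fun t => s.inf' hs (ψ · t)) := by
  intro t₁ t₂ h₁ h₂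
  obtain ⟨y₁, hy₁, e₁⟩ := exists_mem_eq_inf' hs (ψ · t₁)
  obtain ⟨y₂, hy₂, e₂⟩ := exists_mem_eq_inf' hs (ψ · t₂)
  obtain ⟨y₃, hy₃, y₄, hy₄, h⟩ := h y₁ hy₁ y₂ hy₂ t₁ h₁ t₂ h₂
  dsimp only
  rw [e₁, e₂]
  exact (add_le_add (inf'_le _ hy₃) (inf'_le _ hy₄)).trans h

theorem mem_polymatroid_of_subset {A A' : Finset α} {g : Finset α → ℝ} {x : α → ℝ}
    (hg : ∀ s t, s ⊆ t → t ⊆ A' → g s ≤ g t) (hx : x ∈ polymatroid A g)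
    (hxA : ∀ e ∉ A, x e = 0) : x ∈ polymatroid A' g := by
  refine ⟨hx.1, fun s hs => ?_⟩
  rw [← sum_subset (inter_subset_left (s₂ := A)) fun e hes he =>
    hxA e fun h => he (mem_inter.mpr ⟨hes, h⟩)]
  exact (hx.2 _ inter_subset_right).trans (hg _ _ inter_subset_left hs)

end SetFunction

section Sandwich

variable {α : Type*} [DecidableEq α]

/-- Exchanging `s` and `insert e s` between the two arguments of the submodular inequality shows
that this minimum is again submodular. -/
theorem IsSubmodularOn.min_insert {A : Finset α} {f : Finset α → ℝ} {e : α}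
    (hf : IsSubmodularOn (insert e A) f) (he : e ∉ A) (c : ℝ) :
    IsSubmodularOn A (fun s => min (f s) (f (insert e s) - c)) := by
  intro s t hs ht
  have hes : e ∉ s := fun h => he (hs h)
  have het : e ∉ t := fun h => he (ht h)
  have hA : ∀ {u}, u ⊆ A → u ⊆ insert e A := fun hu => hu.trans (subset_insert e A)
  have hA' : ∀ {u}, u ⊆ A → insert e u ⊆ insert e A := insert_subset_insert e
  have h₁ := hf s t (hA hs) (hA ht)
  have h₂ := hf s (insert e t) (hA hs) (hA' ht)
  have h₃ := hf (insert e s) t (hA' hs) (hA ht)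
  have h₄ := hf (insert e s) (insert e t) (hA' hs) (hA' ht)
  rw [inter_insert_of_notMem hes, union_insert] at h₂
  rw [insert_inter_of_notMem het, insert_union] at h₃
  rw [← insert_inter_distrib, ← insert_union_distrib] at h₄
  simp only [min_def]
  split_ifs <;> linarith

theorem IsSupermodularOn.max_insert {A : Finset α} {p : Finset α → ℝ} {e : α}
    (hp : IsSupermodularOn (insert e A) p) (he : e ∉ A) (c : ℝ) :
    IsSupermodularOn A (fun s => max (p s) (p (insert e s) - c)) := by
  have h := IsSubmodularOn.min_insert hp he (-c)
  unfold IsSupermodularOn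
  convert h using 2 with s
  simp only [Pi.neg_apply, neg_sup, neg_sub', sub_neg_eq_add]

theorem IsMonoSubmodular.min_insert {A : Finset α} {b : Finset α → ℝ} {e : α}
    (hb : IsMonoSubmodular (insert e A) b) (he : e ∉ A) {c : ℝ} (hc : c ≤ b {e}) :
    IsMonoSubmodular A (fun s => min (b s) (b (insert e s) - c)) := by
  obtain ⟨hb0, hmono, hsub⟩ := hb
  refine ⟨by simp [hb0, hc], fun s t hst ht => ?_, IsSubmodularOn.min_insert hsub he c⟩
  have ht' : insert e t ⊆ insert e A := insert_subset_insert e ht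
  exact min_le_min (hmono s t hst (ht.trans (subset_insert e A)))
    (sub_le_sub_right (hmono _ _ (insert_subset_insert e hst) ht') c)

/-- The value `c` that the sandwiched vector will take at `e`: the bounds below are what the
contractions `min (b s) (b (insert e s) - c)` and `max (p s) (p (insert e s) - c)` need. -/
theorem exists_sandwich_threshold {A : Finset α} {b p : Finset α → ℝ} {e : α}
    (hb : IsMonoSubmodular (insert e A) b) (hp : IsSupermodularOn (insert e A) p)
    (hpb : ∀ s ⊆ insert e A, p s ≤ b s) (he : e ∉ A) :
    ∃ c, 0 ≤ c ∧ c ≤ b {e} ∧ ∀ s ⊆ A, p (insert e s) - b s ≤ c ∧ c ≤ b (insert e s) - p s := by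
  obtain ⟨hb0, hmono, hsub⟩ := hb
  have hA : ∀ {u}, u ⊆ A → u ⊆ insert e A := fun hu => hu.trans (subset_insert e A)
  have hA' : ∀ {u}, u ⊆ A → insert e u ⊆ insert e A := insert_subset_insert e
  have hes : ∀ {u}, u ⊆ A → e ∉ u := fun hu h => he (hu h)
  refine ⟨max 0 (A.powerset.sup' (powerset_nonempty A) fun s => p (insert e s) - b s),
    le_max_left _ _, max_le ?_ (sup'_le _ _ fun s hs => ?_), fun s hs => ⟨?_, ?_⟩⟩
  · simpa [hb0] using hmono ∅ {e} (empty_subset _) (by simp)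
  · rw [mem_powerset] at hs
    have h := hsub s {e} (hA hs) (by simp)
    rw [inter_singleton_of_notMem (hes hs), hb0, union_singleton] at h
    linarith [hpb _ (hA' hs)]
  · exact (le_sup' (fun s => p (insert e s) - b s) (mem_powerset.mpr hs)).trans (le_max_right _ _)
  · refine max_le ?_ (sup'_le _ _ fun t ht => ?_)
    · linarith [hpb s (hA hs), hmono s (insert e s) (subset_insert e s) (hA' hs)]
    · rw [mem_powerset] at ht
      have hp' := hp (insert e t) s (hA' ht) (hA hs)
      have hb' := hsub t (insert e s) (hA ht) (hA' hs)
      rw [insert_inter_of_notMem (hes hs), insert_union] at hp'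
      rw [inter_insert_of_notMem (hes ht), union_insert] at hb'
      simp only [Pi.neg_apply] at hp'
      linarith [hpb (t ∩ s) (hA (inter_subset_left.trans ht)),
        hpb (insert e (t ∪ s)) (hA' (union_subset ht hs)), inter_comm s t, union_comm s t]

theorem exists_subset_eq_or_eq_insert {A s : Finset α} {e : α} (hs : s ⊆ insert e A) :
    ∃ s' ⊆ A, e ∉ s' ∧ (s = s' ∨ s = insert e s') := by
  refine ⟨s.erase e, subset_insert_iff.mp hs, notMem_erase e s, ?_⟩
  by_cases h : e ∈ s
  · exact Or.inr (insert_erase h).symm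
  · exact Or.inl (erase_eq_of_notMem h).symm

/-- Frank's discrete sandwich theorem. -/
theorem exists_mem_polymatroid_between {A : Finset α} {b p : Finset α → ℝ}
    (hb : IsMonoSubmodular A b) (hp : IsSupermodularOn A p) (hp0 : p ∅ ≤ 0)
    (hpb : ∀ s ⊆ A, p s ≤ b s) :
    ∃ ξ ∈ polymatroid A b, (∀ e ∉ A, ξ e = 0) ∧ ∀ s ⊆ A, p s ≤ ∑ e ∈ s, ξ e := by
  induction A using Finset.induction_on generalizing b p with
  | empty =>
    refine ⟨0, ⟨le_rfl, fun s hs => ?_⟩, fun _ _ => rfl, fun s hs => ?_⟩ <;>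
      simp [subset_empty.mp hs, hb.1, hp0]
  | insert e A he ih =>
    obtain ⟨c, hc0, hcb, hc⟩ := exists_sandwich_threshold hb hp hpb he
    have hA : ∀ {u}, u ⊆ A → u ⊆ insert e A := fun hu => hu.trans (subset_insert e A)
    have hA' : ∀ {u}, u ⊆ A → insert e u ⊆ insert e A := insert_subset_insert e
    obtain ⟨ξ, ⟨hξ0, hξb⟩, hξA, hξp⟩ := ih (hb.min_insert he hcb) (hp.max_insert he c)
      (max_le hp0 (by simpa [hb.1] using (hc ∅ (empty_subset A)).1))
      (fun s hs => max_le (le_min (hpb s (hA hs)) (by linarith [(hc s hs).2]))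
        (le_min (by linarith [(hc s hs).1]) (by linarith [hpb _ (hA' hs)])))
    have hsum : ∀ s, e ∉ s → ∑ x ∈ s, Function.update ξ e c x = ∑ x ∈ s, ξ x :=
      fun s hes => sum_update_of_notMem hes ξ c
    have hsum' : ∀ s, e ∉ s → ∑ x ∈ insert e s, Function.update ξ e c x = c + ∑ x ∈ s, ξ x :=
      fun s hes => by rw [sum_insert hes, Function.update_self, hsum s hes]
    refine ⟨Function.update ξ e c, ⟨fun x => ?_, fun s hs => ?_⟩, fun x hx => ?_, fun s hs => ?_⟩
    · rcases eq_or_ne x e with rfl | hx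
      · simpa using hc0
      · simpa [hx] using hξ0 x
    · obtain ⟨t, ht, het, h | h⟩ := exists_subset_eq_or_eq_insert hs
      · rw [h, hsum t het]; exact (hξb t ht).trans (min_le_left _ _)
      · rw [h, hsum' t het]; linarith [(hξb t ht).trans (min_le_right _ _)]
    · rw [Function.update_of_ne (by rintro rfl; exact hx (mem_insert_self x A))]
      exact hξA x (fun h => hx (mem_insert_of_mem h))
    · obtain ⟨t, ht, het, h | h⟩ := exists_subset_eq_or_eq_insert hs
      · rw [h, hsum t het]; exact (le_max_left _ _).trans (hξp t ht)
      · rw [h, hsum' t het]; linarith [(le_max_right _ _).trans (hξp t ht)]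

/-- Edmonds' polymatroid intersection theorem. -/
theorem exists_mem_polymatroid_inter {A : Finset α} {g₁ g₂ : Finset α → ℝ}
    (h₁ : IsMonoSubmodular A g₁) (h₂ : IsMonoSubmodular A g₂) :
    ∃ x ∈ polymatroid A g₁ ∩ polymatroid A g₂, (∀ e ∉ A, x e = 0) ∧
      ∑ e ∈ A, x e = A.powerset.inf' (powerset_nonempty A) fun t => g₁ t + g₂ (A \ t) := by
  set μ := A.powerset.inf' (powerset_nonempty A) fun t => g₁ t + g₂ (A \ t)
  have hμ : ∀ t ⊆ A, μ ≤ g₁ t + g₂ (A \ t) := fun t ht => inf'_le _ (mem_powerset.mpr ht)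
  have hμ0 : 0 ≤ μ := le_inf' _ _ fun t ht =>
    add_nonneg (h₁.nonneg (mem_powerset.mp ht)) (h₂.nonneg sdiff_subset)
  have hp : IsSupermodularOn A (fun s => μ - g₂ (A \ s)) := fun s t hs ht => by
    have := h₂.isSubmodularOn.comp_sdiff s t hs ht
    simp only [Pi.neg_apply]
    linarith
  -- Truncating `g₁` at `μ` forces the sandwiched vector to have total mass exactly `μ`.
  obtain ⟨ξ, ⟨hξ0, hξb⟩, hξA, hξp⟩ := exists_mem_polymatroid_between (h₁.min_const hμ0) hp
    (by simpa [h₁.1] using hμ ∅ (empty_subset A))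
    fun s hs => le_min (by linarith [hμ s hs])
      (by linarith [h₂.nonneg (sdiff_subset : A \ s ⊆ A)])
  have hsum : ∑ e ∈ A, ξ e = μ :=
    le_antisymm ((hξb A Subset.rfl).trans (min_le_right _ _))
      (by simpa [h₂.1] using hξp A Subset.rfl)
  refine ⟨ξ, ⟨⟨hξ0, fun s hs => (hξb s hs).trans (min_le_left _ _)⟩, hξ0, fun s hs => ?_⟩,
    hξA, hsum⟩
  have h := hξp (A \ s) sdiff_subset
  rw [Finset.sdiff_sdiff_eq_self hs] at h
  linarith [sum_sdiff hs (f := ξ)]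

end Sandwich

section MinCut

variable {α ι : Type*} [DecidableEq ι]

theorem isMonoSubmodular_sum_image [DecidableEq α] (A : Finset α) (β : α → ι) {d : ι → ℝ}
    (hd : 0 ≤ d) :
    IsMonoSubmodular A (fun s => ∑ k ∈ s.image β, d k) := by
  refine ⟨by simp, fun s t hst _ => ?_, fun s t _ _ => ?_⟩
  · exact sum_le_sum_of_subset_of_nonneg (image_subset_image hst) fun k _ _ => hd k
  · have h := sum_le_sum_of_subset_of_nonneg (image_inter_subset β s t) fun k _ _ => hd k
    have h' := sum_union_inter (s₁ := s.image β) (s₂ := t.image β) (f := d)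
    simp only [image_union]
    linarith

def minCut (β : α → ι) (d : ι → ℝ) (g : Finset α → ℝ) (K : Finset ι) (s : Finset α) : ℝ :=
  K.powerset.inf' (powerset_nonempty K) fun Y => ∑ k ∈ Y, d k + g {e ∈ s | β e ∉ Y}

theorem sum_le_minCut {A : Finset α} {g : Finset α → ℝ} {x : α → ℝ} (hx : x ∈ polymatroid A g)
    {β : α → ι} {d : ι → ℝ} (hcap : ∀ k, ∑ e ∈ A with β e = k, x e ≤ d k) (K : Finset ι) :
    ∑ e ∈ A, x e ≤ minCut β d g K A := by
  refine le_inf' _ _ fun Y _ => ?_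
  rw [← sum_filter_add_sum_filter_not A (fun e => β e ∈ Y)]
  gcongr ?_ + ?_
  · rw [← sum_fiberwise_of_maps_to (t := Y) fun e he => (mem_filter.mp he).2]
    refine sum_le_sum fun k _ => le_trans ?_ (hcap k)
    exact sum_le_sum_of_subset_of_nonneg (filter_subset_filter _ (filter_subset _ _))
      fun e _ _ => hx.1 e
  · exact hx.2 _ (filter_subset _ _)

theorem exists_sum_eq_minCut [DecidableEq α] {A : Finset α} {g : Finset α → ℝ}
    (hg : IsMonoSubmodular A g) {β : α → ι} {d : ι → ℝ} (hd : 0 ≤ d) {K : Finset ι} (hK : ∀ e ∈ A, β e ∈ K) :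
    ∃ x ∈ polymatroid A g, (∀ e ∉ A, x e = 0) ∧ (∀ k, ∑ e ∈ A with β e = k, x e ≤ d k) ∧
      ∑ e ∈ A, x e = minCut β d g K A := by
  obtain ⟨x, ⟨hxg, hxd⟩, hxA, hsum⟩ :=
    exists_mem_polymatroid_inter hg (isMonoSubmodular_sum_image A β hd)
  have hcap : ∀ k, ∑ e ∈ A with β e = k, x e ≤ d k := fun k => by
    refine (hxd.2 _ (filter_subset _ _)).trans ?_
    calc ∑ j ∈ {e ∈ A | β e = k}.image β, d j ≤ ∑ j ∈ {k}, d j :=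
          sum_le_sum_of_subset_of_nonneg
            (image_subset_iff.mpr fun e he => mem_singleton.mpr (mem_filter.mp he).2)
            fun j _ _ => hd j
      _ = d k := sum_singleton d k
  refine ⟨x, hxg, hxA, hcap, le_antisymm (sum_le_minCut hxg hcap K) ?_⟩
  rw [hsum]
  refine le_inf' _ _ fun t ht => ?_
  have hY : (A \ t).image β ⊆ K := image_subset_iff.mpr fun e he => hK e (sdiff_subset he)
  refine (inf'_le (fun Y => ∑ k ∈ Y, d k + g {e ∈ A | β e ∉ Y}) (mem_powerset.mpr hY)).trans ?_
  rw [add_comm]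
  gcongr
  refine hg.2.1 _ _ (fun e he => ?_) (mem_powerset.mp ht)
  rw [mem_filter] at he
  by_contra het
  exact he.2 (mem_image_of_mem β (mem_sdiff.mpr ⟨he.1, het⟩))

/-- Optimal cuts `Y₁, Y₂` for `G₁, G₂` are uncrossed to `Y₁ ∪ Y₂, Y₁ ∩ Y₂`, assigned to
`G₁ ∩ G₂, G₁ ∪ G₂` when `i` lies in both or neither of them, and the other way round when it lies
in exactly one. -/
theorem isMonoSubmodularWeak_minCut_union [DecidableEq α] {E C D : Finset α}
    {g : Finset α → ℝ} (hg : IsMonoSubmodular E g) (hC : C ⊆ E) (hD : D ⊆ E) {β : α → ι} {i : ι}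
    (hDi : ∀ e ∈ D, β e = i) (d : ι → ℝ) (K : Finset ι) :
    IsMonoSubmodularWeak D (fun G => minCut β d g K (C ∪ G)) := by
  have hE : ∀ {G : Finset α} {Y : Finset ι}, G ⊆ D → {e ∈ C ∪ G | β e ∉ Y} ⊆ E :=
    fun hG => (filter_subset _ _).trans (union_subset hC (hG.trans hD))
  refine ⟨fun G₁ G₂ h₁₂ h₂ => le_inf' _ _ fun Y hY => (inf'_le _ hY).trans ?_,
    isSubmodularOn_inf' K.powerset (powerset_nonempty K)
      (fun Y G => ∑ k ∈ Y, d k + g {e ∈ C ∪ G | β e ∉ Y}) fun Y₁ hY₁ Y₂ hY₂ G₁ h₁ G₂ h₂ => ?_⟩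
  · exact add_le_add_right (hg.2.1 _ _ (filter_subset_filter _ (union_subset_union_right h₁₂))
      (hE h₂)) _
  set P := {e ∈ C ∪ G₁ | β e ∉ Y₁}
  set Q := {e ∈ C ∪ G₂ | β e ∉ Y₂}
  have hPQ := hg.2.2 P Q (hE h₁) (hE h₂)
  have hPQE : P ∩ Q ⊆ E := inter_subset_left.trans (hE h₁)
  have hPQE' : P ∪ Q ⊆ E := union_subset (hE h₁) (hE h₂)
  have hdY := sum_union_inter (s₁ := Y₁) (s₂ := Y₂) (f := d)
  rw [mem_powerset] at hY₁ hY₂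
  have hi : ∀ e, e ∈ G₁ ∨ e ∈ G₂ → β e = i := fun e he => hDi e (he.elim (h₁ ·) (h₂ ·))
  by_cases hY : i ∈ Y₁ ↔ i ∈ Y₂
  · refine ⟨Y₁ ∪ Y₂, mem_powerset.mpr (union_subset hY₁ hY₂), Y₁ ∩ Y₂,
      mem_powerset.mpr (inter_subset_left.trans hY₁), ?_⟩
    have h₃ : {e ∈ C ∪ G₁ ∩ G₂ | β e ∉ Y₁ ∪ Y₂} ⊆ P ∩ Q := by
      intro e; simp only [P, Q, mem_filter, mem_union, mem_inter]; tauto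
    have h₄ : {e ∈ C ∪ (G₁ ∪ G₂) | β e ∉ Y₁ ∩ Y₂} ⊆ P ∪ Q := by
      intro e; have := hi e; simp only [P, Q, mem_filter, mem_union, mem_inter]; grind
    linarith [hg.2.1 _ _ h₃ hPQE, hg.2.1 _ _ h₄ hPQE']
  · refine ⟨Y₁ ∩ Y₂, mem_powerset.mpr (inter_subset_left.trans hY₁), Y₁ ∪ Y₂,
      mem_powerset.mpr (union_subset hY₁ hY₂), ?_⟩
    have h₃ : {e ∈ C ∪ G₁ ∩ G₂ | β e ∉ Y₁ ∩ Y₂} ⊆ P ∪ Q := by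
      intro e; have := hi e; simp only [P, Q, mem_filter, mem_union, mem_inter]; grind
    have h₄ : {e ∈ C ∪ (G₁ ∪ G₂) | β e ∉ Y₁ ∪ Y₂} ⊆ P ∩ Q := by
      intro e; have := hi e; simp only [P, Q, mem_filter, mem_union, mem_inter]; grind
    linarith [hg.2.1 _ _ h₃ hPQE', hg.2.1 _ _ h₄ hPQE]

end MinCut

section Market

variable {E : Finset (B × S)} {fj : S → Finset (B × S) → ℝ} {w : B × S → ℝ}

set_option linter.unusedSectionVars false

theorem fTot_of_subset_Ej (hfj : ∀ j : S, IsMonoSubmodular (Ej E j) (fj j)) {j : S}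
    {s : Finset (B × S)} (hs : s ⊆ Ej E j) : fTot E fj s = fj j s := by
  unfold fTot
  rw [Fintype.sum_eq_single j fun j' hj' => ?_, inter_eq_right.mpr hs]
  have h : Ej E j' ∩ s = ∅ := eq_empty_of_forall_notMem fun e he => hj' <|
    (mem_filter.mp (mem_inter.mp he).1).2.symm.trans (mem_filter.mp (hs (mem_inter.mp he).2)).2
  rw [h]
  exact (hfj j').1

theorem isMonoSubmodular_fTot (hfj : ∀ j : S, IsMonoSubmodular (Ej E j) (fj j))
    (A : Finset (B × S)) : IsMonoSubmodular A (fTot E fj) := by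
  refine ⟨sum_eq_zero fun j _ => by rw [inter_empty]; exact (hfj j).1,
    fun s t hst _ => sum_le_sum fun j _ =>
      (hfj j).2.1 _ _ (inter_subset_inter_left hst) inter_subset_left,
    fun s t _ _ => ?_⟩
  unfold fTot
  rw [← sum_add_distrib, ← sum_add_distrib]
  refine sum_le_sum fun j _ => ?_
  rw [inter_inter_distrib_left, inter_union_distrib_left]
  exact (hfj j).2.2 _ _ inter_subset_left inter_subset_left

theorem vsum_le_fTot (hw : memP E fj w) {s : Finset (B × S)} (hs : s ⊆ E) :
    vsum w s ≤ fTot E fj s := by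
  unfold vsum fTot
  rw [← sum_fiberwise s (·.2) w]
  refine sum_le_sum fun j _ => ?_
  have hj : {e ∈ s | e.2 = j} = Ej E j ∩ s := by
    ext e
    simp only [Ej, mem_filter, mem_inter]
    exact ⟨fun h => ⟨⟨hs h.1, h.2⟩, h.1⟩, fun h => ⟨h.2, h.1.2⟩⟩
  rw [hj]
  exact hw.2.2 j _ inter_subset_left

theorem fw_set_finite (E : Finset (B × S)) (fj : S → Finset (B × S) → ℝ) (w : B × S → ℝ)
    (s : Finset (B × S)) :
    {r : ℝ | ∃ s', s ⊆ s' ∧ s' ⊆ E ∧ r = fTot E fj s' - vsum w s'}.Finite := by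
  refine (E.powerset.image fun s' => fTot E fj s' - vsum w s').finite_toSet.subset ?_
  rintro r ⟨s', -, hs', rfl⟩
  exact mem_image_of_mem _ (mem_powerset.mpr hs')

theorem fw_le {s s' : Finset (B × S)} (hss' : s ⊆ s') (hs' : s' ⊆ E) :
    fw E fj w s ≤ fTot E fj s' - vsum w s' :=
  csInf_le (fw_set_finite E fj w s).bddBelow ⟨s', hss', hs', rfl⟩

theorem exists_fw_eq {s : Finset (B × S)} (hs : s ⊆ E) :
    ∃ s', s ⊆ s' ∧ s' ⊆ E ∧ fw E fj w s = fTot E fj s' - vsum w s' := by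
  have hne : {r : ℝ | ∃ s', s ⊆ s' ∧ s' ⊆ E ∧ r = fTot E fj s' - vsum w s'}.Nonempty :=
    ⟨_, E, hs, Subset.rfl, rfl⟩
  exact hne.csInf_mem (fw_set_finite E fj w s)

theorem isMonoSubmodular_fw (hfj : ∀ j : S, IsMonoSubmodular (Ej E j) (fj j))
    (hw : memP E fj w) : IsMonoSubmodular E (fw E fj w) := by
  have hf := isMonoSubmodular_fTot hfj E
  refine ⟨le_antisymm ?_ ?_, fun s t hst ht => ?_, fun s t hs ht => ?_⟩
  · simpa [hf.1, vsum] using fw_le (fj := fj) (w := w) (empty_subset ∅) (empty_subset E)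
  · obtain ⟨s', -, hs', h⟩ := exists_fw_eq (fj := fj) (w := w) (empty_subset E)
    linarith [vsum_le_fTot hw hs']
  · obtain ⟨t', htt', ht', h⟩ := exists_fw_eq (fj := fj) (w := w) ht
    exact h ▸ fw_le (hst.trans htt') ht'
  · obtain ⟨s', hss', hs', hs₁⟩ := exists_fw_eq (fj := fj) (w := w) hs
    obtain ⟨t', htt', ht', ht₁⟩ := exists_fw_eq (fj := fj) (w := w) ht
    have h₁ := fw_le (fj := fj) (w := w) (inter_subset_inter hss' htt')
      (inter_subset_left.trans hs')
    have h₂ := fw_le (fj := fj) (w := w) (union_subset_union hss' htt') (union_subset hs' ht')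
    have h₃ := hf.2.2 s' t' hs' ht'
    have h₄ : vsum w (s' ∪ t') + vsum w (s' ∩ t') = vsum w s' + vsum w t' := sum_union_inter
    linarith

theorem memP_add_iff (hfj : ∀ j : S, IsMonoSubmodular (Ej E j) (fj j)) (hw : memP E fj w)
    {x : B × S → ℝ} (hx : 0 ≤ x) :
    memP E fj (w + x) ↔ x ∈ polymatroid E (fw E fj w) ∧ ∀ e ∉ E, x e = 0 := by
  have hadd : ∀ s, vsum (w + x) s = vsum w s + vsum x s := fun s => sum_add_distrib
  constructor
  · intro hwx
    refine ⟨⟨hx, fun s hs => ?_⟩, fun e he => ?_⟩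
    · obtain ⟨s', hss', hs', h⟩ := exists_fw_eq (fj := fj) (w := w) hs
      have hxs : vsum x s ≤ vsum x s' := sum_le_sum_of_subset_of_nonneg hss' fun e _ _ => hx e
      show vsum x s ≤ _
      linarith [vsum_le_fTot hwx hs', hadd s']
    · have h := hwx.2.1 e he
      rw [Pi.add_apply, hw.2.1 e he, zero_add] at h
      exact h
  · rintro ⟨⟨-, hxfw⟩, hxE⟩
    refine ⟨fun e => add_nonneg (hw.1 e) (hx e), fun e he => ?_, fun j s hs => ?_⟩
    · rw [Pi.add_apply, hw.2.1 e he, hxE e he, add_zero]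
    · have hsE : s ⊆ E := hs.trans (filter_subset _ _)
      have hxs : vsum x s ≤ fw E fj w s := hxfw s hsE
      rw [hadd, ← fTot_of_subset_Ej hfj hs]
      linarith [fw_le (fj := fj) (w := w) Subset.rfl hsE]

theorem fwd_eq_minCut (hfj : ∀ j : S, IsMonoSubmodular (Ej E j) (fj j)) (hw : memP E fj w)
    {d : B → ℝ} (hd : ∀ i : B, 0 ≤ d i) {F : Finset (B × S)} (hF : F ⊆ E) :
    fwd E fj w d F = minCut Prod.fst d (fw E fj w) univ F := by
  have hfw := isMonoSubmodular_fw hfj hw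
  refine IsGreatest.csSup_eq ⟨?_, ?_⟩
  · obtain ⟨x, hxfw, hxF, hcap, hsum⟩ :=
      exists_sum_eq_minCut (hfw.subset hF) hd (K := univ) fun e _ => mem_univ e.1
    have hxE : ∀ e ∉ E, x e = 0 := fun e he => hxF e fun h => he (hF h)
    have hxP : memP E fj (w + x) := (memP_add_iff hfj hw hxfw.1).mpr
      ⟨mem_polymatroid_of_subset hfw.2.1 hxfw hxF, hxE⟩
    refine ⟨x, ⟨hxfw.1, hxE, hxP, fun k => ?_⟩, hsum.symm⟩
    calc vsum x (Ei E k) = ∑ e ∈ F with e.1 = k, x e :=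
          (sum_subset (filter_subset_filter _ hF) fun e he hn =>
            hxF e fun h => hn (mem_filter.mpr ⟨h, (mem_filter.mp he).2⟩)).symm
      _ ≤ d k := hcap k
  · rintro r ⟨x, ⟨hx0, -, hwx, hcap⟩, rfl⟩
    have hxfw := ((memP_add_iff hfj hw hx0).mp hwx).1
    refine sum_le_minCut ⟨hx0, fun s hs => hxfw.2 s (hs.trans hF)⟩
      (fun k => le_trans ?_ (hcap k)) univ
    exact sum_le_sum_of_subset_of_nonneg (filter_subset_filter _ hF) fun e _ _ => hx0 e

end Market

theorem fwd_marginal_monotone_submodular_general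
    (E : Finset (B × S)) (fj : S → Finset (B × S) → ℝ)
    (hfj : ∀ j : S, IsMonoSubmodular (Ej E j) (fj j))
    (w : B × S → ℝ) (hw : memP E fj w)
    (d : B → ℝ) (hd : ∀ i : B, 0 ≤ d i)
    (i : B) (X : Finset B) :
    IsMonoSubmodular (Ei E i)
      (fun G => fwd E fj w d (EX E X ∪ G) - fwd E fj w d (EX E X)) := by
  have hEX : EX E X ⊆ E := filter_subset _ _
  have hEi : Ei E i ⊆ E := filter_subset _ _
  have hcut := isMonoSubmodularWeak_minCut_union (isMonoSubmodular_fw hfj hw) hEX hEi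
    (fun e he => (mem_filter.mp he).2) d univ
  have hfwd : IsMonoSubmodularWeak (Ei E i) fun G => fwd E fj w d (EX E X ∪ G) :=
    hcut.congr fun G hG => (fwd_eq_minCut hfj hw hd (union_subset hEX (hG.trans hEi))).symm
  simpa only [union_empty] using hfwd.sub_empty

/-- for `X ⊆ N - i`, the function `G ↦ f_{w,d}(E_X ∪ G) - f_{w,d}(E_X)`
is monotone submodular on `E_i`. -/
theorem fwd_marginal_monotone_submodular
    (E : Finset (B × S)) (fj : S → Finset (B × S) → ℝ)
    (hfj : ∀ j : S, IsMonoSubmodular (Ej E j) (fj j))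
    (w : B × S → ℝ) (hw : memP E fj w)
    (d : B → ℝ) (hd : ∀ i : B, 0 ≤ d i)
    (i : B) (X : Finset B) (hX : i ∉ X) :
    IsMonoSubmodular (Ei E i)
      (fun G => fwd E fj w d (EX E X ∪ G) - fwd E fj w d (EX E X)) :=
  fwd_marginal_monotone_submodular_general E fj hfj w hw d hd i X

end TwoSidedMarket
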